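/- Let F be a saturated fusion system on a finite 2-group S. If v_M ∈ B(F)^× for all maximal subgroups M < S, then the Frattini subgroup Φ(S) is strongly closed in F; if additionally Φ(S) is abelian, then Φ(S) is normal in F. -/

import Mathlib

namespace BurnsideFusion

/-! ### The Burnside ring, realized via marks inside the ghost ring -/

/-- The vector of marks of the transitive `G`-set `G/K`:
its value at `H ≤ G` is the number of `H`-fixed points of `G/K`. -/
noncomputable def markVector (G : Type*) [Group G] (K : Subgroup G) : Subgroup G → ℤ :=
  fun H => (Nat.card {x : G ⧸ K // ∀ h : G, h ∈ H → h • x = x} : ℤ)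

/-- The Burnside ring of `G`, realized (faithfully, via the injective mark homomorphism)
as the subring of the ghost ring `∏_{H ≤ G} ℤ` generated by the marks of the
transitive `G`-sets `G/K`.  The mark of an element `a` at `H` is just `a H`. -/
noncomputable def burnsideRing (G : Type*) [Group G] : Subring (Subgroup G → ℤ) :=
  Subring.closure (Set.range (markVector G))

/-- The unit group `B(G)^×` of the Burnside ring, as a set:
since every unit of `B(G)` has all marks `±1`, the units are exactly the
elements squaring to `1`. -/
def burnsideUnits (G : Type*) [Group G] : Set (Subgroup G → ℤ) :=
  {b | b ∈ burnsideRing G ∧ b * b = 1}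

/-- Restriction `B(G) → B(S)` for `S ≤ G`, on marks:
`(n_H)_{H ≤ G} ↦ (n_P)_{P ≤ S}`. -/
def resMark {G : Type*} [Group G] (S : Subgroup G) (b : Subgroup G → ℤ) :
    Subgroup ↥S → ℤ :=
  fun P => b (P.map S.subtype)

/-- The action of a (bijective) endomorphism `f` of `G` on the ghost ring, on marks:
`(f · b)_Q = b_{f⁻¹(Q)}`. -/
def autAct {G : Type*} [Group G] (f : G →* G) (b : Subgroup G → ℤ) : Subgroup G → ℤ :=
  fun Q => b (Q.comap f)

/-- The elements of the Burnside ring fixed by a set `A` of automorphisms of `G`.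
(For `A = Aut_F(P)` this is `B(P)^{Out_F(P)}`, since the inner automorphisms
act trivially on `B(P)`.) -/
def fixedBurnside (G : Type*) [Group G] (A : Set (MulAut G)) : Set (Subgroup G → ℤ) :=
  {b | b ∈ burnsideRing G ∧ ∀ α ∈ A, autAct α.toMonoidHom b = b}

/-- The units of the Burnside ring fixed by a set `A` of automorphisms of `G`. -/
def fixedUnits (G : Type*) [Group G] (A : Set (MulAut G)) : Set (Subgroup G → ℤ) :=
  {b | b ∈ burnsideUnits G ∧ ∀ α ∈ A, autAct α.toMonoidHom b = b}

/-- The relative trace map `tr^Γ_Δ` on the (units of the) Burnside ring: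
the product of `α · b` over a set of representatives `α` of the cosets `Γ/Δ`. -/
noncomputable def relTrace {G : Type*} [Group G] (Γ Δ : Subgroup (MulAut G))
    (b : Subgroup G → ℤ) : Subgroup G → ℤ :=
  ∏ᶠ c : ↥Γ ⧸ Δ.subgroupOf Γ, autAct ((Quotient.out c : ↥Γ) : MulAut G).toMonoidHom b

/-! ### Fusion systems -/

/-- The homomorphism `P → Q` induced by conjugation by `s`. -/
def conjMap {S : Type*} [Group S] (s : S) (P Q : Subgroup S)
    (h : ∀ x ∈ P, s * x * s⁻¹ ∈ Q) : ↥P →* ↥Q where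
  toFun x := ⟨s * ↑x * s⁻¹, h x x.2⟩
  map_one' := by ext; simp
  map_mul' x y := by ext; simp

/-- A fusion system `F` on a group `S`: a category whose objects are the subgroups
of `S` and whose morphisms are injective group homomorphisms, containing all the
homomorphisms induced by conjugation in `S`, and such that every morphism factors
as an isomorphism in `F` followed by an inclusion. -/
structure FusionSystem (S : Type*) [Group S] where
  /-- The set of `F`-morphisms `P → Q`. -/
  Hom : ∀ P Q : Subgroup S, Set (↥P →* ↥Q)
  /-- All morphisms are injective. -/
  inj : ∀ {P Q : Subgroup S} {f : ↥P →* ↥Q}, f ∈ Hom P Q → Function.Injective f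
  /-- `Hom_S(P,Q) ⊆ Hom_F(P,Q)`. -/
  conj_mem : ∀ (s : S) (P Q : Subgroup S) (h : ∀ x ∈ P, s * x * s⁻¹ ∈ Q),
    conjMap s P Q h ∈ Hom P Q
  /-- Morphisms compose. -/
  comp_mem : ∀ {P Q R : Subgroup S} {f : ↥P →* ↥Q} {g : ↥Q →* ↥R},
    f ∈ Hom P Q → g ∈ Hom Q R → g.comp f ∈ Hom P R
  /-- Every morphism factors as an isomorphism in `F` onto its image followed by an
  inclusion. -/
  factor_mem : ∀ {P Q : Subgroup S} {f : ↥P →* ↥Q}, f ∈ Hom P Q →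
    ∃ (R : Subgroup S) (_ : R ≤ Q) (e : ↥P ≃* ↥R), e.toMonoidHom ∈ Hom P R ∧
      ∀ x : ↥P, ((e x : ↥R) : S) = ((f x : ↥Q) : S)
  /-- Isomorphisms in `F` are invertible in `F`. -/
  isoinv_mem : ∀ {P Q : Subgroup S} (e : ↥P ≃* ↥Q),
    e.toMonoidHom ∈ Hom P Q → e.symm.toMonoidHom ∈ Hom Q P

namespace FusionSystem

variable {S : Type*} [Group S] (F : FusionSystem S)

/-- Two subgroups of `S` are `F`-conjugate (isomorphic in `F`). -/
def SubConj (P Q : Subgroup S) : Prop :=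
  ∃ f ∈ F.Hom P Q, Function.Surjective ⇑f

/-- Two elements of `S` are `F`-conjugate: some `F`-isomorphism `⟨x⟩ → ⟨y⟩` sends
`x` to `y`. -/
def ElemConj (x y : S) : Prop :=
  ∃ f ∈ F.Hom (Subgroup.zpowers x) (Subgroup.zpowers y),
    f ⟨x, Subgroup.mem_zpowers x⟩ = ⟨y, Subgroup.mem_zpowers y⟩

/-- A subgroup `P ≤ S` is strongly closed in `F` if the `F`-conjugacy class of every
element of `P` is contained in `P`. -/
def StronglyClosed (P : Subgroup S) : Prop :=
  ∀ x ∈ P, ∀ y : S, F.ElemConj x y → y ∈ P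

/-- A subgroup `P` is normal in `F`: every morphism `φ ∈ Hom_F(Q,R)` extends to a
morphism `ψ ∈ Hom_F(QP, RP)` with `ψ|_Q = φ` and `ψ(P) = P`. -/
def NormalIn (P : Subgroup S) : Prop :=
  ∀ (Q R : Subgroup S), ∀ φ ∈ F.Hom Q R,
    ∃ ψ ∈ F.Hom (Q ⊔ P) (R ⊔ P),
      (∀ (x : S) (hx : x ∈ Q),
        ((ψ ⟨x, Subgroup.mem_sup_left hx⟩ : ↥(R ⊔ P)) : S) = ((φ ⟨x, hx⟩ : ↥R) : S)) ∧
      (∀ (x : S) (hx : x ∈ P),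
        ((ψ ⟨x, Subgroup.mem_sup_right hx⟩ : ↥(R ⊔ P)) : S) ∈ P) ∧
      (∀ y ∈ P, ∃ (x : S) (hx : x ∈ P),
        ((ψ ⟨x, Subgroup.mem_sup_right hx⟩ : ↥(R ⊔ P)) : S) = y)

/-- `Aut_F(P)`: the group of `F`-automorphisms of `P`. -/
def AutF (P : Subgroup S) : Subgroup (MulAut ↥P) where
  carrier := {α | α.toMonoidHom ∈ F.Hom P P}
  one_mem' := by
    have h : ∀ x ∈ P, (1 : S) * x * (1 : S)⁻¹ ∈ P := fun x hx => by simpa using hx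
    have h1 := F.conj_mem 1 P P h
    have e : conjMap (1 : S) P P h = (1 : MulAut ↥P).toMonoidHom := by
      ext x; simp [conjMap]
    rwa [e] at h1
  mul_mem' := by
    intro α β hα hβ
    have h := F.comp_mem hβ hα
    have e : α.toMonoidHom.comp β.toMonoidHom = (α * β).toMonoidHom := rfl
    rwa [e] at h
  inv_mem' := by
    intro α hα
    exact F.isoinv_mem α hα

end FusionSystem

/-- The conjugation automorphism of `P` induced by an element of its normalizer. -/
def conjAut {S : Type*} [Group S] (P : Subgroup S) (s : ↥(Subgroup.normalizer (P : Set S))) : MulAut ↥P where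
  toFun x := ⟨(s : S) * ↑x * (s : S)⁻¹, (Subgroup.mem_normalizer_iff.mp s.2 ↑x).mp x.2⟩
  invFun x := ⟨(s : S)⁻¹ * ↑x * (s : S), by
    have h := (Subgroup.mem_normalizer_iff.mp ((Subgroup.normalizer (P : Set S)).inv_mem s.2) (↑x : S)).mp x.2
    simpa using h⟩
  left_inv x := by ext; simp; group
  right_inv x := by ext; simp; group
  map_mul' x y := by ext; simp

/-- The homomorphism `N_S(P) → Aut(P)` given by conjugation. -/
def conjAutHom {S : Type*} [Group S] (P : Subgroup S) : ↥(Subgroup.normalizer (P : Set S)) →* MulAut ↥P where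
  toFun := conjAut P
  map_one' := by ext x; simp [conjAut]
  map_mul' s t := by ext x; simp [conjAut]; group

/-- `Aut_S(P)`: the subgroup of `Aut(P)` of automorphisms induced by conjugation in `S`. -/
def AutS {S : Type*} [Group S] (P : Subgroup S) : Subgroup (MulAut ↥P) :=
  (conjAutHom P).range

end BurnsideFusion

namespace BurnsideFusion

variable {S : Type*} [Group S]

/-- The automorphism of `⊤ ≤ S` induced by an automorphism of `S`. -/
def topRestrict (α : MulAut S) : MulAut ↥(⊤ : Subgroup S) :=
  (Subgroup.topEquiv.trans α).trans Subgroup.topEquiv.symm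

theorem topRestrict_one : topRestrict (1 : MulAut S) = 1 := by
  ext x; simp [topRestrict]

theorem topRestrict_mul (α β : MulAut S) :
    topRestrict (α * β) = topRestrict α * topRestrict β := by
  ext x; simp [topRestrict]

theorem topRestrict_inv (α : MulAut S) :
    topRestrict α⁻¹ = (topRestrict α).symm := by
  ext x; simp [topRestrict, MulAut.inv_def]

/-- `Aut_F(S)`, realized as a subgroup of `Aut(S)`. -/
def FusionSystem.AutFS (F : FusionSystem S) : Subgroup (MulAut S) where
  carrier := {α | (topRestrict α).toMonoidHom ∈ F.Hom ⊤ ⊤}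
  one_mem' := by
    have h := (F.AutF ⊤).one_mem
    have h' : (1 : MulAut ↥(⊤ : Subgroup S)).toMonoidHom ∈ F.Hom ⊤ ⊤ := h
    simpa [Set.mem_setOf_eq, topRestrict_one] using h'
  mul_mem' := by
    intro α β hα hβ
    have h := F.comp_mem (hβ : (topRestrict β).toMonoidHom ∈ F.Hom ⊤ ⊤) hα
    have e : (topRestrict α).toMonoidHom.comp (topRestrict β).toMonoidHom
        = (topRestrict (α * β)).toMonoidHom := by
      rw [topRestrict_mul]; rfl
    show (topRestrict (α * β)).toMonoidHom ∈ F.Hom ⊤ ⊤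
    rw [← e]; exact h
  inv_mem' := by
    intro α hα
    have h := F.isoinv_mem (topRestrict α) hα
    simpa [Set.mem_setOf_eq, topRestrict_inv] using h

end BurnsideFusion

namespace BurnsideFusion

variable {S : Type*} [Group S]

namespace FusionSystem

variable (F : FusionSystem S)

/-- `P` is fully normalized in `F`: its normalizer has maximal order in its
`F`-conjugacy class. -/
def FullyNormalized (P : Subgroup S) : Prop :=
  ∀ Q : Subgroup S, F.SubConj P Q → Nat.card ↥(Subgroup.normalizer (Q : Set S)) ≤ Nat.card ↥(Subgroup.normalizer (P : Set S))

/-- `P` is fully centralized in `F`: its centralizer has maximal order in its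
`F`-conjugacy class. -/
def FullyCentralized (P : Subgroup S) : Prop :=
  ∀ Q : Subgroup S, F.SubConj P Q →
    Nat.card ↥(Subgroup.centralizer (Q : Set S)) ≤ Nat.card ↥(Subgroup.centralizer (P : Set S))

/-- `P` is `F`-centric: every `F`-conjugate `Q` of `P` satisfies `C_S(Q) ≤ Q`. -/
def Centric (P : Subgroup S) : Prop :=
  ∀ Q : Subgroup S, F.SubConj P Q → Subgroup.centralizer (Q : Set S) ≤ Q

/-- `P` is fully `F`-automized: `Aut_S(P)` is a Sylow `p`-subgroup of `Aut_F(P)`. -/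
def FullyAutomized (p : ℕ) (P : Subgroup S) : Prop :=
  AutS P ≤ F.AutF P ∧ IsPGroup p ↥((AutS P).subgroupOf (F.AutF P)) ∧
    ¬ p ∣ ((AutS P).subgroupOf (F.AutF P)).index

end FusionSystem

/-- For an `F`-isomorphism `φ : P → Q`, the subset
`N_φ = { g ∈ N_S(P) | φ ∘ c_g ∘ φ⁻¹ ∈ Aut_S(Q) }` of `S`. -/
def NphiSet (P Q : Subgroup S) (φ : ↥P ≃* ↥Q) : Set S :=
  {g | ∃ hg : g ∈ Subgroup.normalizer (P : Set S), ∃ h : S, ∀ (x : S) (hx : x ∈ P),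
    ((φ ⟨g * x * g⁻¹, (Subgroup.mem_normalizer_iff.mp hg x).mp hx⟩ : ↥Q) : S)
      = h * ((φ ⟨x, hx⟩ : ↥Q) : S) * h⁻¹}

namespace FusionSystem

variable (F : FusionSystem S)

/-- `Q` is receptive in `F`: every `F`-isomorphism `φ : P → Q` extends to a morphism
in `F` defined on `N_φ`. -/
def Receptive (Q : Subgroup S) : Prop :=
  ∀ (P : Subgroup S) (φ : ↥P ≃* ↥Q), φ.toMonoidHom ∈ F.Hom P Q →
    ∃ T : Subgroup S, (T : Set S) = NphiSet P Q φ ∧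
      ∃ ψ ∈ F.Hom T ⊤, ∀ (x : S) (hx : x ∈ P) (hx' : x ∈ T),
        ((ψ ⟨x, hx'⟩ : ↥(⊤ : Subgroup S)) : S) = ((φ ⟨x, hx⟩ : ↥Q) : S)

/-- `F` is saturated: every `F`-conjugacy class of subgroups contains a fully
automized, receptive member. -/
def IsSaturated (p : ℕ) : Prop :=
  ∀ P : Subgroup S, ∃ Q : Subgroup S, F.SubConj P Q ∧ F.FullyAutomized p Q ∧ F.Receptive Q

end FusionSystem

theorem innRange_subgroupOf_normal (F : FusionSystem S) (P : Subgroup S) :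
    (((MulAut.conj : ↥P →* MulAut ↥P).range).subgroupOf (F.AutF P)).Normal := by
  have h : ((MulAut.conj : ↥P →* MulAut ↥P).range).Normal := by
    constructor
    intro n hn g
    obtain ⟨x, rfl⟩ := hn
    refine ⟨g x, ?_⟩
    ext y
    simp [MulAut.conj_apply, MulAut.inv_def, mul_assoc]
  exact h.subgroupOf _

/-- `Out_F(P) = Aut_F(P)/Inn(P)`. -/
def OutF (F : FusionSystem S) (P : Subgroup S) : Type _ :=
  ↥(F.AutF P) ⧸ ((MulAut.conj : ↥P →* MulAut ↥P).range.subgroupOf (F.AutF P))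

noncomputable instance (F : FusionSystem S) (P : Subgroup S) : Group (OutF F P) :=
  letI := innRange_subgroupOf_normal F P
  QuotientGroup.Quotient.group _

/-- A strongly `p`-embedded subgroup: a proper subgroup `H < Γ` such that `p` divides
`|H|` and `p` does not divide `|H ∩ gHg⁻¹|` for every `g ∉ H`. -/
def IsStronglyPEmbedded (p : ℕ) {Γ : Type*} [Group Γ] (H : Subgroup Γ) : Prop :=
  H ≠ ⊤ ∧ p ∣ Nat.card ↥H ∧
    ∀ g : Γ, g ∉ H → ¬ p ∣ Nat.card ↥(H ⊓ H.map (MulAut.conj g).toMonoidHom)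

/-- `R` is `F`-essential: `R` is fully normalized, `F`-centric, and `Out_F(R)`
contains a strongly `p`-embedded subgroup. -/
def IsEssential (p : ℕ) (F : FusionSystem S) (R : Subgroup S) : Prop :=
  F.FullyNormalized R ∧ F.Centric R ∧
    ∃ H : Subgroup (OutF F R), IsStronglyPEmbedded p H

/-- The Burnside ring `B(F)` of a fusion system: the subring of `B(S)` of elements
whose marks agree on `F`-conjugate subgroups. -/
noncomputable def FusionSystem.burnside (F : FusionSystem S) : Subring (Subgroup S → ℤ) where
  carrier := {b | b ∈ burnsideRing S ∧ ∀ P Q : Subgroup S, F.SubConj P Q → b P = b Q}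
  zero_mem' := ⟨zero_mem _, fun _ _ _ => rfl⟩
  one_mem' := ⟨one_mem _, fun _ _ _ => rfl⟩
  add_mem' := fun ha hb => ⟨add_mem ha.1 hb.1, fun P Q h => by
    simp only [Pi.add_apply, ha.2 P Q h, hb.2 P Q h]⟩
  mul_mem' := fun ha hb => ⟨mul_mem ha.1 hb.1, fun P Q h => by
    simp only [Pi.mul_apply, ha.2 P Q h, hb.2 P Q h]⟩
  neg_mem' := fun ha => ⟨neg_mem ha.1, fun P Q h => by
    simp only [Pi.neg_apply, ha.2 P Q h]⟩

/-- The unit group `B(F)^×` of the Burnside ring of a fusion system, as a set. -/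
noncomputable def FusionSystem.burnsideUnits (F : FusionSystem S) : Set (Subgroup S → ℤ) :=
  {b | b ∈ F.burnside ∧ b * b = 1}

/-- `F`-conjugacy as an equivalence relation on the subgroups of `S`. -/
def fconjSetoid (F : FusionSystem S) : Setoid (Subgroup S) where
  r := F.SubConj
  iseqv := by
    constructor
    · intro P
      refine ⟨conjMap 1 P P (fun x hx => by simpa using hx), F.conj_mem _ _ _ _, ?_⟩
      intro y; exact ⟨y, by ext; simp [conjMap]⟩
    · rintro P Q ⟨f, hf, hsurj⟩
      have hbij : Function.Bijective ⇑f := ⟨F.inj hf, hsurj⟩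
      have he : (MulEquiv.ofBijective f hbij).toMonoidHom ∈ F.Hom P Q := by
        have : (MulEquiv.ofBijective f hbij).toMonoidHom = f := by ext x; rfl
        rwa [this]
      exact ⟨(MulEquiv.ofBijective f hbij).symm.toMonoidHom, F.isoinv_mem _ he,
        (MulEquiv.ofBijective f hbij).symm.surjective⟩
    · rintro P Q R ⟨f, hf, hfs⟩ ⟨g, hg, hgs⟩
      exact ⟨g.comp f, F.comp_mem hf hg, hgs.comp hfs⟩

open Classical in
/-- The unit `v_M ∈ B(S)^×` attached to a maximal subgroup `M < S`:
its mark at `P` is `-1` if `P ≤ M` and `+1` otherwise. -/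
noncomputable def vUnit (S : Type*) [Group S] (M : Subgroup S) : Subgroup S → ℤ :=
  fun P => if P ≤ M then -1 else 1

end BurnsideFusion

namespace BurnsideFusion

variable {G : Type*} [Group G]

/-- `S` is a Sylow `p`-subgroup of `G`. -/
def IsSylow (p : ℕ) (S : Subgroup G) : Prop :=
  IsPGroup p ↥S ∧ ¬ p ∣ S.index

/-- `K` is a Sylow `p`-subgroup of `H` (both subgroups of an ambient group `G`). -/
def IsSylowIn (p : ℕ) (H K : Subgroup G) : Prop :=
  K ≤ H ∧ IsPGroup p ↥K ∧ ¬ p ∣ (K.subgroupOf H).index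

/-- An element of the ghost ring of `S` has marks which agree on pairs of subgroups
of `S` that are conjugate by an element of `N ≤ G`.  For `N = ⊤` this is stability
for the Frobenius fusion system `F_S(G)`; for `N = N_G(S)` it is stability for
`F_S(N_G(S))`. -/
def frobStable (S N : Subgroup G) (b : Subgroup ↥S → ℤ) : Prop :=
  ∀ P Q : Subgroup ↥S,
    (∃ g ∈ N, (P.map S.subtype).map (MulAut.conj g).toMonoidHom = Q.map S.subtype) →
    b P = b Q

/-- The Burnside ring `B(F_S(N))` of the fusion system on `S` induced by a subgroup
`N` of `G` containing `S`, as a subset of `B(S)`. -/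
noncomputable def frobBurnside (S N : Subgroup G) : Set (Subgroup ↥S → ℤ) :=
  {b | b ∈ burnsideRing ↥S ∧ frobStable S N b}

/-- The unit group `B(F_S(N))^×`, as a set. -/
noncomputable def frobUnits (S N : Subgroup G) : Set (Subgroup ↥S → ℤ) :=
  {b | b ∈ frobBurnside S N ∧ b * b = 1}

/-- Restriction `B(N) → B(S)` for `S ≤ N ≤ G`, on marks. -/
def resMark₂ (S N : Subgroup G) (b : Subgroup ↥N → ℤ) : Subgroup ↥S → ℤ :=
  fun P => b ((P.map S.subtype).subgroupOf N)

/-- Tensor induction `B(Ten^G_S) : B(S)^× → B(G)^×`, on marks: the mark of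
`Ten^G_S b` at `H ≤ G` is the product over the double cosets `HgS` of the marks
`b_{(g⁻¹Hg ∩ S)}`. -/
noncomputable def tenInd (S : Subgroup G) (b : Subgroup ↥S → ℤ) : Subgroup G → ℤ :=
  fun H => ∏ᶠ c : DoubleCoset.Quotient (H : Set G) (S : Set G),
    b ((H.comap (MulAut.conj (Quotient.out c)).toMonoidHom).subgroupOf S)

/-- `Aut_G(S)`: the automorphisms of `S ≤ G` induced by conjugation by elements
of `G` (as a set). -/
def autGSet (S : Subgroup G) : Set (MulAut ↥S) :=
  {α | ∃ g : G, ∀ x : ↥S, ((α x : ↥S) : G) = g * (x : G) * g⁻¹}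

end BurnsideFusion

/-!
A maximal subgroup `M` of the 2-group `S` has index 2, and `v_M ∈ B(F)` says that of two
`F`-conjugate subgroups either both or neither lie in `M`. Applied to `⟨x⟩` and its image under an
`F`-morphism `f`, this puts `x` and `f x` in the same coset of every `M`, so `f x * x⁻¹ ∈ Φ(S)`:
`F` acts trivially on `S / Φ(S)`, and `Φ(S)` is strongly closed.

For normality we show, by downward induction on `|Q|`, that every `F`-morphism out of `Q` is the
restriction of an `F`-endomorphism of `QΦ(S)`. If `Φ(S) ≰ Q`, nilpotency gives `b ∈ Φ(S) ∖ Q`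
normalizing `Q`. Transporting `c_b` along an `F`-isomorphism `ρ` from `Q` onto a fully automized,
receptive `T` gives an automorphism fixing `T ∩ Φ(S)` pointwise, as `Φ(S)` is abelian. Such
`F`-automorphisms form a normal 2-subgroup of `Aut_F(T)`, hence lie in its Sylow subgroup
`Aut_S(T)`; so `b ∈ N_ρ`, and receptivity extends `ρ` to `Q⟨b⟩`, where induction applies.
-/

section

open Subgroup

variable {G : Type*} [Group G]

theorem sInf_isCoatom_eq_frattini : sInf {M : Subgroup G | IsCoatom M} = frattini G :=
  sInf_eq_iInf

theorem mem_frattini_iff {x : G} : x ∈ frattini G ↔ ∀ M : Subgroup G, IsCoatom M → x ∈ M := by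
  rw [← sInf_isCoatom_eq_frattini, mem_sInf]
  rfl

theorem IsPGroup.index_eq_of_isCoatom [Finite G] {p : ℕ} [hp : Fact p.Prime] (hG : IsPGroup p G)
    {M : Subgroup G} (hM : IsCoatom M) : M.index = p := by
  obtain ⟨n, hn⟩ := (hG.to_subgroup M).exists_card_eq
  obtain ⟨m, hm⟩ := hG.exists_card_eq
  have hnm : n < m := by
    have hlt : Nat.card M < Nat.card G :=
      lt_of_le_of_ne M.card_le_card_group ((card_eq_iff_eq_top M).not.mpr hM.1)
    rw [hn, hm] at hlt
    exact (Nat.pow_lt_pow_iff_right hp.out.one_lt).mp hlt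
  obtain ⟨K, hK, hMK⟩ := Sylow.exists_subgroup_card_pow_succ (hm ▸ pow_dvd_pow p hnm) hn
  have hKtop : K = ⊤ := hM.2 K <| lt_of_le_of_ne hMK fun h => by
    rw [← h, hn] at hK
    exact (Nat.pow_lt_pow_succ hp.out.one_lt).ne hK
  have := M.card_mul_index
  rw [hn, ← card_top (G := G), ← hKtop, hK, pow_succ] at this
  exact Nat.eq_of_mul_eq_mul_left (pow_pos hp.out.pos n) this

theorem IsPGroup.mul_inv_mem_frattini [Finite G] (hG : IsPGroup 2 G) {x y : G}
    (h : ∀ M : Subgroup G, IsCoatom M → (x ∈ M ↔ y ∈ M)) : y * x⁻¹ ∈ frattini G := by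
  refine mem_frattini_iff.mpr fun M hM => ?_
  rw [mul_mem_iff_of_index_two (hG.index_eq_of_isCoatom hM), inv_mem_iff]
  exact (h M hM).symm

theorem exists_mem_normalizer_not_mem [Group.IsNilpotent G] {N Q : Subgroup G} [N.Normal]
    (h : ¬ N ≤ Q) : ∃ b ∈ N, b ∈ normalizer (Q : Set G) ∧ b ∉ Q := by
  have hlt : Q.subgroupOf (Q ⊔ N) < ⊤ :=
    lt_top_iff_ne_top.mpr fun htop => h (le_sup_right.trans (subgroupOf_eq_top.mp htop))
  obtain ⟨u, hu, hu'⟩ := SetLike.exists_of_lt (Group.normalizerCondition_of_isNilpotent _ hlt)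
  rw [← subgroupOf_normalizer_eq le_sup_left, mem_subgroupOf] at hu
  rw [mem_subgroupOf] at hu'
  obtain ⟨q, hq, b, hb, hqb⟩ := mem_sup_of_normal_right.mp u.2
  refine ⟨b, hb, ?_, fun hbQ => hu' (hqb ▸ Q.mul_mem hq hbQ)⟩
  have : b = q⁻¹ * u := by rw [← hqb]; group
  exact this ▸ mul_mem (inv_mem (le_normalizer hq)) hu

theorem eq_zpowers_of_mulEquiv {x : G} {H : Subgroup G} (e : zpowers x ≃* H) :
    H = zpowers (e ⟨x, mem_zpowers x⟩ : G) := by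
  refine le_antisymm (fun y hy => ?_) (zpowers_le.mpr (e _).2)
  obtain ⟨⟨z, hz⟩, hzy⟩ := e.surjective ⟨y, hy⟩
  obtain ⟨k, rfl⟩ := mem_zpowers_iff.mp hz
  have : (⟨x ^ k, hz⟩ : zpowers x) = ⟨x, mem_zpowers x⟩ ^ k := rfl
  rw [this, map_zpow] at hzy
  exact ⟨k, congrArg Subtype.val hzy⟩

theorem MulAut.pow_apply_eq_mul_pow (c : MulAut G) {x : G} (hx : c (x⁻¹ * c x) = x⁻¹ * c x)
    (n : ℕ) : (c ^ n) x = x * (x⁻¹ * c x) ^ n := by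
  induction n with
  | zero => simp
  | succ n ih =>
    rw [pow_succ', MulAut.mul_apply, ih, map_mul, map_pow, hx, pow_succ', ← mul_assoc,
      mul_inv_cancel_left]

end

namespace BurnsideFusion

open Subgroup

variable {S : Type*} [Group S]

def AgreesWith {U V Q R : Subgroup S} (ψ : U →* V) (f : Q →* R) : Prop :=
  ∀ (x : S) (hxQ : x ∈ Q) (hxU : x ∈ U), (ψ ⟨x, hxU⟩ : S) = f ⟨x, hxQ⟩

theorem AgreesWith.trans {U V Q₂ W Q R : Subgroup S} {ψ : U →* V} {g : Q₂ →* W} {f : Q →* R}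
    (h₁ : AgreesWith ψ g) (h₂ : AgreesWith g f) (hQ : Q ≤ Q₂) : AgreesWith ψ f :=
  fun x hxQ hxU => (h₁ x (hQ hxQ) hxU).trans (h₂ x hxQ (hQ hxQ))

theorem self_subset_NphiSet {Q T : Subgroup S} (ρ : Q ≃* T) : (Q : Set S) ⊆ NphiSet Q T ρ :=
  fun q hq => ⟨le_normalizer hq, ρ ⟨q, hq⟩, fun x hx => by
    have : (⟨q * x * q⁻¹, _⟩ : Q) = ⟨q, hq⟩ * ⟨x, hx⟩ * ⟨q, hq⟩⁻¹ := rfl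
    rw [this, map_mul, map_mul, map_inv]
    simp⟩

namespace FusionSystem

theorem SubConj.exists_mulEquiv {F : FusionSystem S} {P Q : Subgroup S} (h : F.SubConj P Q) :
    ∃ e : P ≃* Q, e.toMonoidHom ∈ F.Hom P Q := by
  obtain ⟨f, hf, hsurj⟩ := h
  exact ⟨MulEquiv.ofBijective f ⟨F.inj hf, hsurj⟩, hf⟩

variable (F : FusionSystem S)

theorem inclusion_mem {P Q : Subgroup S} (h : P ≤ Q) : inclusion h ∈ F.Hom P Q := by
  convert F.conj_mem 1 P Q (fun x hx => by simpa using h hx)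
  ext
  simp [conjMap]

theorem autS_le_autF (P : Subgroup S) : AutS P ≤ F.AutF P := by
  rintro _ ⟨s, rfl⟩
  exact F.conj_mem s P P fun x hx => (mem_normalizer_iff.mp s.2 x).mp hx

theorem trans_mem {P Q R : Subgroup S} {e : P ≃* Q} {e' : Q ≃* R}
    (he : e.toMonoidHom ∈ F.Hom P Q) (he' : e'.toMonoidHom ∈ F.Hom Q R) :
    (e.trans e').toMonoidHom ∈ F.Hom P R :=
  F.comp_mem he he'

theorem exists_codRestrict {Q R R₂ : Subgroup S} {f : Q →* R} (hf : f ∈ F.Hom Q R)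
    (h : ∀ x, (f x : S) ∈ R₂) : ∃ g ∈ F.Hom Q R₂, ∀ x, (g x : S) = f x := by
  obtain ⟨R', -, e, he, hef⟩ := F.factor_mem hf
  have hle : R' ≤ R₂ := fun y hy => by
    obtain ⟨x, hx⟩ := e.surjective ⟨y, hy⟩
    have hxy : (f x : S) = y := by rw [← hef, hx]
    exact hxy ▸ h x
  exact ⟨(inclusion hle).comp e.toMonoidHom, F.comp_mem he (F.inclusion_mem hle), hef⟩

theorem exists_leftInverse_mem [Finite S] {P : Subgroup S} {f : P →* P} (hf : f ∈ F.Hom P P) :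
    ∃ g ∈ F.Hom P P, ∀ x, g (f x) = x :=
  let e := MulEquiv.ofBijective f (Finite.injective_iff_bijective.mp (F.inj hf))
  ⟨e.symm.toMonoidHom, F.isoinv_mem e hf, e.symm_apply_apply⟩

theorem le_iff_le_of_subConj {M P Q : Subgroup S} (hv : vUnit S M ∈ F.burnsideUnits)
    (h : F.SubConj P Q) : P ≤ M ↔ Q ≤ M := by
  have := hv.1.2 P Q h
  simp only [vUnit] at this
  split_ifs at this <;> simp_all

def ActsTriviallyModFrattini : Prop :=
  ∀ ⦃Q R : Subgroup S⦄ ⦃f : Q →* R⦄, f ∈ F.Hom Q R → ∀ x : Q, (f x : S) * (x : S)⁻¹ ∈ frattini S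

theorem actsTriviallyModFrattini_of_vUnit_mem [Finite S] (hS : IsPGroup 2 S)
    (hv : ∀ M : Subgroup S, IsCoatom M → vUnit S M ∈ F.burnsideUnits) :
    F.ActsTriviallyModFrattini := by
  intro Q R f hf x
  refine hS.mul_inv_mem_frattini fun M hM => ?_
  have hx : zpowers (x : S) ≤ Q := zpowers_le.mpr x.2
  obtain ⟨R', -, e, he, hef⟩ := F.factor_mem (F.comp_mem (F.inclusion_mem hx) hf)
  rw [← zpowers_le, F.le_iff_le_of_subConj (hv M hM) ⟨e.toMonoidHom, he, e.surjective⟩,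
    eq_zpowers_of_mulEquiv e, zpowers_le, hef]
  rfl

def ExtendsToSupFrattini (Q : Subgroup S) : Prop :=
  ∀ (R : Subgroup S) (f : Q →* R), f ∈ F.Hom Q R →
    ∃ ψ ∈ F.Hom (Q ⊔ frattini S) (Q ⊔ frattini S), AgreesWith ψ f

def fixingFrattini (T : Subgroup S) : Subgroup (F.AutF T) :=
  (fixingSubgroup (MulAut T) {w : T | (w : S) ∈ frattini S}).subgroupOf (F.AutF T)

namespace ActsTriviallyModFrattini

variable {F}

theorem map_mem_frattini (hΦ : F.ActsTriviallyModFrattini) {Q R : Subgroup S} {f : Q →* R}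
    (hf : f ∈ F.Hom Q R) (x : Q) (hx : (x : S) ∈ frattini S) : (f x : S) ∈ frattini S := by
  simpa using mul_mem (hΦ hf x) hx

theorem inv_mul_mem_frattini (hΦ : F.ActsTriviallyModFrattini) {Q R : Subgroup S} {f : Q →* R}
    (hf : f ∈ F.Hom Q R) (x : Q) : (x : S)⁻¹ * f x ∈ frattini S :=
  Normal.mem_comm inferInstance (hΦ hf x)

theorem map_mem_sup_frattini (hΦ : F.ActsTriviallyModFrattini) {Q R : Subgroup S}
    {f : Q →* R} (hf : f ∈ F.Hom Q R) (x : Q) : (f x : S) ∈ Q ⊔ frattini S := by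
  simpa using mul_mem (mem_sup_right (hΦ hf x)) (mem_sup_left x.2)

theorem le_sup_frattini (hΦ : F.ActsTriviallyModFrattini) {Q R : Subgroup S} {f : Q →* R}
    (hf : f ∈ F.Hom Q R) : Q ≤ R ⊔ frattini S := fun x hx => by
  simpa using mul_mem (mem_sup_left (f ⟨x, hx⟩).2)
    (mem_sup_right (inv_mem (hΦ.inv_mul_mem_frattini hf ⟨x, hx⟩)))

theorem sup_frattini_eq (hΦ : F.ActsTriviallyModFrattini) {Q R : Subgroup S} (e : Q ≃* R)
    (he : e.toMonoidHom ∈ F.Hom Q R) : Q ⊔ frattini S = R ⊔ frattini S :=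
  le_antisymm (sup_le (hΦ.le_sup_frattini he) le_sup_right)
    (sup_le (hΦ.le_sup_frattini (F.isoinv_mem e he)) le_sup_right)

theorem stronglyClosed_frattini (hΦ : F.ActsTriviallyModFrattini) :
    F.StronglyClosed (frattini S) := by
  rintro x hx y ⟨f, hf, hfx⟩
  simpa [hfx] using hΦ.map_mem_frattini hf ⟨x, mem_zpowers x⟩ hx

theorem exists_map_eq_of_mem_frattini [Finite S] (hΦ : F.ActsTriviallyModFrattini)
    {P R : Subgroup S} {f : P →* R} (hf : f ∈ F.Hom P R) (hP : frattini S ≤ P) {y : S}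
    (hy : y ∈ frattini S) : ∃ (x : S) (hx : x ∈ frattini S), (f ⟨x, hP hx⟩ : S) = y := by
  let g (w : frattini S) : frattini S := ⟨f ⟨w, hP w.2⟩, hΦ.map_mem_frattini hf _ w.2⟩
  have hg : Function.Injective g := fun _ _ h =>
    Subtype.ext (Subtype.mk.inj (F.inj hf (Subtype.ext (Subtype.mk.inj h))))
  obtain ⟨w, hw⟩ := Finite.injective_iff_surjective.mp hg ⟨y, hy⟩
  exact ⟨w, w.2, congrArg Subtype.val hw⟩

theorem extendsToSupFrattini_of_frattini_le (hΦ : F.ActsTriviallyModFrattini) {Q : Subgroup S}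
    (hQ : frattini S ≤ Q) : F.ExtendsToSupFrattini Q := by
  intro R f hf
  obtain ⟨g, hg, hgf⟩ := F.exists_codRestrict hf (hΦ.map_mem_sup_frattini hf)
  have hle : Q ⊔ frattini S ≤ Q := sup_le le_rfl hQ
  exact ⟨g.comp (inclusion hle), F.comp_mem (F.inclusion_mem hle) hg, fun x hx _ => hgf ⟨x, hx⟩⟩

theorem fixingFrattini_normal (hΦ : F.ActsTriviallyModFrattini) (T : Subgroup S) :
    (F.fixingFrattini T).Normal := by
  constructor
  intro κ hκ α
  simp only [fixingFrattini, mem_subgroupOf, mem_fixingSubgroup_iff,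
    MulAut.smul_def] at hκ ⊢
  intro w hw
  have hw' := hΦ.map_mem_frattini (α⁻¹).2 w hw
  simp_all

theorem isPGroup_fixingFrattini [Finite S] {p : ℕ} [Fact p.Prime] (hΦ : F.ActsTriviallyModFrattini)
    (hS : IsPGroup p S) (T : Subgroup S) : IsPGroup p (F.fixingFrattini T) := by
  obtain ⟨v, hv⟩ := hS.exists_card_eq
  intro κ
  refine ⟨v, Subtype.ext (Subtype.ext (MulEquiv.ext fun x => ?_))⟩
  have hκ : ∀ w : T, (w : S) ∈ frattini S → (κ : MulAut T) w = w := by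
    simpa [fixingFrattini, mem_subgroupOf, mem_fixingSubgroup_iff] using κ.2
  set c : MulAut T := ((κ : F.AutF T) : MulAut T)
  have hd : c (x⁻¹ * c x) = x⁻¹ * c x :=
    hκ _ (by simpa using hΦ.inv_mul_mem_frattini (κ : F.AutF T).2 x)
  have hexp : (x⁻¹ * c x) ^ p ^ v = 1 := Subtype.ext (by simp [← hv, pow_card_eq_one'])
  simp [c, MulAut.pow_apply_eq_mul_pow c hd, hexp]

theorem mem_autS_of_forall_fixes [Finite S] {p : ℕ} [Fact p.Prime]
    (hΦ : F.ActsTriviallyModFrattini) (hS : IsPGroup p S) {T : Subgroup S}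
    (hfa : F.FullyAutomized p T) {γ : MulAut T} (hγ : γ ∈ F.AutF T)
    (hfix : ∀ w : T, (w : S) ∈ frattini S → γ w = w) : γ ∈ AutS T := by
  obtain ⟨-, hSyl, hidx⟩ := hfa
  have := hΦ.fixingFrattini_normal T
  have hle := (hΦ.isPGroup_fixingFrattini hS T).le_sylow_of_normal (hSyl.toSylow hidx)
  have hmem : (⟨γ, hγ⟩ : F.AutF T) ∈ F.fixingFrattini T := by
    simpa [fixingFrattini, mem_subgroupOf, mem_fixingSubgroup_iff] using hfix
  exact mem_subgroupOf.mp (hle hmem)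

theorem mem_NphiSet [Finite S] {p : ℕ} [Fact p.Prime] (hΦ : F.ActsTriviallyModFrattini)
    (hS : IsPGroup p S) {Q T : Subgroup S} (ρ : Q ≃* T) (hρ : ρ.toMonoidHom ∈ F.Hom Q T)
    (hfa : F.FullyAutomized p T) {b : S} (hbc : b ∈ centralizer (frattini S : Set S))
    (hbn : b ∈ normalizer (Q : Set S)) : b ∈ NphiSet Q T ρ := by
  set γ : MulAut T := (ρ.symm.trans (conjAut Q ⟨b, hbn⟩)).trans ρ
  have hγ : γ ∈ F.AutF T :=
    F.trans_mem (F.trans_mem (F.isoinv_mem ρ hρ) (F.autS_le_autF Q ⟨⟨b, hbn⟩, rfl⟩)) hρ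
  have hfix (w : T) (hw : (w : S) ∈ frattini S) : γ w = w := by
    have hw' := hΦ.map_mem_frattini (F.isoinv_mem ρ hρ) w hw
    have hcomm : b * ρ.symm w = ρ.symm w * b := (mem_centralizer_iff.mp hbc _ hw').symm
    have : conjAut Q ⟨b, hbn⟩ (ρ.symm w) = ρ.symm w := Subtype.ext (by simp [conjAut, hcomm])
    simp [γ, this]
  obtain ⟨s, hs⟩ := hΦ.mem_autS_of_forall_fixes hS hfa hγ hfix
  refine ⟨hbn, s, fun x hx => ?_⟩
  have := congrArg (fun α : MulAut T => (α (ρ ⟨x, hx⟩) : S)) hs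
  simpa [γ, conjAutHom, conjAut] using this.symm

theorem exists_lt_agreesWith_of_receptive [Finite S] {p : ℕ} [Fact p.Prime]
    (hΦ : F.ActsTriviallyModFrattini) (hS : IsPGroup p S)
    (hab : ∀ x ∈ frattini S, ∀ y ∈ frattini S, x * y = y * x) {Q T : Subgroup S} (ρ : Q ≃* T)
    (hρ : ρ.toMonoidHom ∈ F.Hom Q T) (hfa : F.FullyAutomized p T) (hrec : F.Receptive T)
    (hQ : ¬ frattini S ≤ Q) :
    ∃ Q₂ : Subgroup S, Q < Q₂ ∧ Q₂ ≤ Q ⊔ frattini S ∧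
      ∃ ψ ∈ F.Hom Q₂ ⊤, AgreesWith ψ ρ.toMonoidHom := by
  have := hS.isNilpotent
  obtain ⟨b, hbΦ, hbn, hbQ⟩ := exists_mem_normalizer_not_mem hQ
  obtain ⟨T₁, hT₁, ψ, hψ, hagree⟩ := hrec Q ρ hρ
  have hQT₁ : Q ≤ T₁ := fun q hq => by
    rw [← SetLike.mem_coe, hT₁]
    exact self_subset_NphiSet ρ hq
  have hbT₁ : b ∈ T₁ := by
    rw [← SetLike.mem_coe, hT₁]
    exact hΦ.mem_NphiSet hS ρ hρ hfa (mem_centralizer_iff.mpr fun z hz => hab z hz b hbΦ) hbn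
  have hle : Q ⊔ zpowers b ≤ T₁ := sup_le hQT₁ (zpowers_le.mpr hbT₁)
  refine ⟨Q ⊔ zpowers b, lt_of_le_of_ne le_sup_left fun h => hbQ ?_,
    sup_le_sup_left (zpowers_le.mpr hbΦ) _, ψ.comp (inclusion hle),
    F.comp_mem (F.inclusion_mem hle) hψ, fun x hx hx' => hagree x hx (hle hx')⟩
  exact h ▸ mem_sup_right (mem_zpowers b)

theorem exists_agreesWith_of_receptive [Finite S] {p : ℕ} [Fact p.Prime]
    (hΦ : F.ActsTriviallyModFrattini) (hS : IsPGroup p S)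
    (hab : ∀ x ∈ frattini S, ∀ y ∈ frattini S, x * y = y * x) {Q T : Subgroup S}
    (ih : ∀ Q₂ : Subgroup S, Nat.card Q < Nat.card Q₂ → F.ExtendsToSupFrattini Q₂)
    (hQ : ¬ frattini S ≤ Q) (ρ : Q ≃* T) (hρ : ρ.toMonoidHom ∈ F.Hom Q T)
    (hfa : F.FullyAutomized p T) (hrec : F.Receptive T) :
    ∃ Ψ ∈ F.Hom (Q ⊔ frattini S) (Q ⊔ frattini S), AgreesWith Ψ ρ.toMonoidHom := by
  obtain ⟨Q₂, hlt, hle, ψ, hψ, hagree⟩ :=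
    hΦ.exists_lt_agreesWith_of_receptive hS hab ρ hρ hfa hrec hQ
  have hsup : Q₂ ⊔ frattini S = Q ⊔ frattini S :=
    le_antisymm (sup_le hle le_sup_right) (sup_le_sup_right hlt.le _)
  have hcard : Nat.card Q < Nat.card Q₂ :=
    lt_of_le_of_ne (card_le_of_le hlt.le) fun h => hlt.ne (eq_of_le_of_card_ge hlt.le h.ge)
  have hext := ih Q₂ hcard ⊤ ψ hψ
  rw [hsup] at hext
  obtain ⟨Ψ, hΨ, hΨψ⟩ := hext
  exact ⟨Ψ, hΨ, hΨψ.trans hagree hlt.le⟩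

theorem extendsToSupFrattini_of_forall_card_lt [Finite S] {p : ℕ} [Fact p.Prime]
    (hΦ : F.ActsTriviallyModFrattini) (hS : IsPGroup p S) (hF : F.IsSaturated p)
    (hab : ∀ x ∈ frattini S, ∀ y ∈ frattini S, x * y = y * x) {Q : Subgroup S}
    (ih : ∀ Q₂ : Subgroup S, Nat.card Q < Nat.card Q₂ → F.ExtendsToSupFrattini Q₂) :
    F.ExtendsToSupFrattini Q := by
  by_cases hQ : frattini S ≤ Q
  · exact hΦ.extendsToSupFrattini_of_frattini_le hQ
  intro R f hf
  -- `f = τ⁻¹ ∘ (τ ∘ e)` for `e : Q ≃ R'` and `τ : R' ≃ T` onto a receptive `T`: extend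
  -- `τ ∘ e` and `τ` separately, then compose.
  obtain ⟨R', -, e, he, hef⟩ := F.factor_mem hf
  obtain ⟨T, hconj, hfa, hrec⟩ := hF R'
  obtain ⟨τ, hτ⟩ := hconj.exists_mulEquiv
  have hcard : Nat.card R' = Nat.card Q := (Nat.card_congr e.toEquiv).symm
  have hsup : R' ⊔ frattini S = Q ⊔ frattini S := (hΦ.sup_frattini_eq e he).symm
  have hR' : ¬ frattini S ≤ R' := fun h => hQ <| by
    have hQR' : Q ≤ R' := le_sup_left.trans (hsup.symm.trans (sup_eq_left.mpr h)).le
    exact (eq_of_le_of_card_ge hQR' hcard.le) ▸ h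
  obtain ⟨Ψ₀, hΨ₀, h₀⟩ :=
    hΦ.exists_agreesWith_of_receptive hS hab ih hQ (e.trans τ) (F.trans_mem he hτ) hfa hrec
  have hext := hΦ.exists_agreesWith_of_receptive hS hab (hcard ▸ ih) hR' τ hτ hfa hrec
  rw [hsup] at hext
  obtain ⟨Ψ₁, hΨ₁, h₁⟩ := hext
  obtain ⟨Ψ₁', hΨ₁', hinv⟩ := F.exists_leftInverse_mem hΨ₁
  refine ⟨Ψ₁'.comp Ψ₀, F.comp_mem hΨ₀ hΨ₁', fun x hx hx' => ?_⟩
  have hfx : (f ⟨x, hx⟩ : S) ∈ R' := hef ⟨x, hx⟩ ▸ (e ⟨x, hx⟩).2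
  have : Ψ₀ ⟨x, hx'⟩ = Ψ₁ ⟨f ⟨x, hx⟩, hΦ.map_mem_sup_frattini hf ⟨x, hx⟩⟩ := Subtype.ext <| by
    rw [h₀ x hx hx', h₁ _ hfx]
    exact congrArg (fun y => (τ y : S)) (Subtype.ext (hef ⟨x, hx⟩))
  simp [this, hinv]

theorem extendsToSupFrattini [Finite S] {p : ℕ} [Fact p.Prime] (hΦ : F.ActsTriviallyModFrattini)
    (hS : IsPGroup p S) (hF : F.IsSaturated p)
    (hab : ∀ x ∈ frattini S, ∀ y ∈ frattini S, x * y = y * x) (Q : Subgroup S) :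
    F.ExtendsToSupFrattini Q := by
  induction h : Nat.card S - Nat.card Q using Nat.strong_induction_on generalizing Q with
  | _ n ih =>
    refine hΦ.extendsToSupFrattini_of_forall_card_lt hS hF hab fun Q₂ hQ₂ => ih _ ?_ Q₂ rfl
    have := Q₂.card_le_card_group
    omega

theorem normalIn_frattini [Finite S] {p : ℕ} [Fact p.Prime] (hΦ : F.ActsTriviallyModFrattini)
    (hS : IsPGroup p S) (hF : F.IsSaturated p)
    (hab : ∀ x ∈ frattini S, ∀ y ∈ frattini S, x * y = y * x) : F.NormalIn (frattini S) := by
  intro Q R φ hφ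
  obtain ⟨ψ₀, hψ₀, hagree⟩ := hΦ.extendsToSupFrattini hS hF hab Q R φ hφ
  have hle : Q ⊔ frattini S ≤ R ⊔ frattini S := sup_le (hΦ.le_sup_frattini hφ) le_sup_right
  have hψ := F.comp_mem hψ₀ (F.inclusion_mem hle)
  exact ⟨_, hψ, fun x hx => hagree x hx _, fun x hx => hΦ.map_mem_frattini hψ _ hx,
    fun y hy => hΦ.exists_map_eq_of_mem_frattini hψ le_sup_right hy⟩

end ActsTriviallyModFrattini

end FusionSystem

end BurnsideFusion

namespace BurnsideFusion

theorem statement15 {S : Type*} [Group S] [Finite S] (hS : IsPGroup 2 S)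
    (F : FusionSystem S) (hF : F.IsSaturated 2)
    (hv : ∀ M : Subgroup S, IsCoatom M → vUnit S M ∈ F.burnsideUnits) :
    F.StronglyClosed (sInf {M : Subgroup S | IsCoatom M}) ∧
    ((∀ x ∈ sInf {M : Subgroup S | IsCoatom M},
        ∀ y ∈ sInf {M : Subgroup S | IsCoatom M}, x * y = y * x) →
      F.NormalIn (sInf {M : Subgroup S | IsCoatom M})) := by
  have hΦ := F.actsTriviallyModFrattini_of_vUnit_mem hS hv
  rw [sInf_isCoatom_eq_frattini]
  exact ⟨hΦ.stronglyClosed_frattini, hΦ.normalIn_frattini hS hF⟩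

end BurnsideFusion
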